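/- Let χ satisfy M₂(χ) < ∞ and the moment condition of order 2 with constant c, and let f ∈ C²(ℝ²). Then ‖G_w f − f‖_∞ = O(w^{−2}) as w → ∞; in particular w · (G_w f(x,y) − f(x,y)) → 0 uniformly in (x,y) ∈ ℝ² as w → ∞. -/

import Mathlib

open MeasureTheory Filter
open scoped ENNReal BigOperators Topology

noncomputable def absMoment (χ : ℝ × ℝ → ℝ) (p₁ p₂ : ℕ) : ℝ≥0∞ :=
  ⨆ u : ℝ, ⨆ v : ℝ, ∑' k : ℤ, ∑' j : ℤ,
    ENNReal.ofReal (|χ (u - (k : ℝ), v - (j : ℝ))| * |u - (k : ℝ)| ^ p₁ * |v - (j : ℝ)| ^ p₂)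

noncomputable def Mmoment (χ : ℝ × ℝ → ℝ) (η : ℕ) : ℝ≥0∞ :=
  ⨆ p : {p : ℕ × ℕ // p.1 + p.2 = η}, absMoment χ p.1.1 p.1.2

def PartitionOfUnity2 (χ : ℝ × ℝ → ℝ) : Prop :=
  ∀ u v : ℝ, ∑' k : ℤ, ∑' j : ℤ, χ (u - (k : ℝ), v - (j : ℝ)) = 1

def MomentCondition (χ : ℝ × ℝ → ℝ) (r : ℕ) (c : ℝ) : Prop :=
  (∀ u v : ℝ, ∀ p₁ p₂ : ℕ, 1 ≤ p₁ + p₂ → p₁ + p₂ ≤ r - 1 →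
    ∑' k : ℤ, ∑' j : ℤ, χ (u - (k : ℝ), v - (j : ℝ)) * (u - (k : ℝ)) ^ p₁ * (v - (j : ℝ)) ^ p₂ = 0) ∧
  (∀ u v : ℝ, ∀ p₁ p₂ : ℕ, p₁ + p₂ = r →
    ∑' k : ℤ, ∑' j : ℤ, χ (u - (k : ℝ), v - (j : ℝ)) * (u - (k : ℝ)) ^ p₁ * (v - (j : ℝ)) ^ p₂ = c)

noncomputable def Gop (χ : ℝ × ℝ → ℝ) (w : ℝ) (f : ℝ × ℝ → ℝ) (x y : ℝ) : ℝ :=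
  ∑' k : ℤ, ∑' j : ℤ, χ (w * x - (k : ℝ), w * y - (j : ℝ)) * f ((k : ℝ) / w, (j : ℝ) / w)

noncomputable def Sop (χ : ℝ × ℝ → ℝ) (w : ℝ) (f : ℝ × ℝ → ℝ) (x y : ℝ) : ℝ :=
  ∑' k : ℤ, ∑' j : ℤ, χ (w * x - (k : ℝ), w * y - (j : ℝ)) *
    (w ^ 2 * ∫ u in ((k : ℝ) / w)..(((k : ℝ) + 1) / w),
      ∫ v in ((j : ℝ) / w)..(((j : ℝ) + 1) / w), f (u, v))

noncomputable def pX (f : ℝ × ℝ → ℝ) : ℝ × ℝ → ℝ := fun p => deriv (fun t => f (t, p.2)) p.1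
noncomputable def pY (f : ℝ × ℝ → ℝ) : ℝ × ℝ → ℝ := fun p => deriv (fun t => f (p.1, t)) p.2
noncomputable def pd (f : ℝ × ℝ → ℝ) (i j : ℕ) : ℝ × ℝ → ℝ := pX^[i] (pY^[j] f)

noncomputable def supNorm (g : ℝ × ℝ → ℝ) : ℝ := ⨆ p : ℝ × ℝ, |g p|

def mixedDiff (f : ℝ × ℝ → ℝ) (u v x y : ℝ) : ℝ := f (x, y) - f (x, v) - f (u, y) + f (u, v)

def BContinuous (f : ℝ × ℝ → ℝ) : Prop :=
  ∀ x₀ y₀ : ℝ, Tendsto (fun p : ℝ × ℝ => mixedDiff f x₀ y₀ p.1 p.2) (nhds (x₀, y₀)) (nhds 0)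

noncomputable def omegaB (f : ℝ × ℝ → ℝ) (δ₁ δ₂ : ℝ) : ℝ :=
  sSup {t : ℝ | ∃ x y u v : ℝ, |x - u| < δ₁ ∧ |y - v| < δ₂ ∧ t = |mixedDiff f u v x y|}

noncomputable def Kop (χ : ℝ × ℝ → ℝ) (w : ℝ) (f : ℝ × ℝ → ℝ) (x y : ℝ) : ℝ :=
  Sop χ w (fun p => f (p.1, y) + f (x, p.2) - f (p.1, p.2)) x y

/-!
Put `u = w x`, `v = w y`. The partition of unity and the vanishing first moments of `χ` turn
`G_w f (x, y) - f (x, y)` into the `χ (u - k, v - j)`-weighted sum of the first-order Taylor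
remainders of `f` at `(x, y)`, evaluated at the sample points `(k / w, j / w)`. Each remainder is
bounded by the second partial derivatives of `f` times a quadratic form in `|u - k| / w` and
`|v - j| / w`, so the whole sum is at most the second absolute moments of `χ` times `w⁻²`.
-/

lemma abs_sub_le_of_abs_deriv_le {g : ℝ → ℝ} {C : ℝ} (hg : Differentiable ℝ g)
    (hC : ∀ t, |deriv g t| ≤ C) (a b : ℝ) : |g b - g a| ≤ C * |b - a| := by
  simpa only [Real.norm_eq_abs] using
    Convex.norm_image_sub_le_of_norm_deriv_le (fun t _ => hg t) (fun t _ => hC t)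
      convex_univ (Set.mem_univ a) (Set.mem_univ b)

lemma abs_sub_sub_deriv_mul_le {g : ℝ → ℝ} {C : ℝ} (hg : Differentiable ℝ g)
    (hg' : Differentiable ℝ (deriv g)) (hC : ∀ t, |deriv (deriv g) t| ≤ C) (a b : ℝ) :
    |g b - g a - deriv g a * (b - a)| ≤ C * (b - a) ^ 2 := by
  set h : ℝ → ℝ := fun t => g t - deriv g a * t
  have hh : ∀ t, HasDerivAt h (deriv g t - deriv g a) t := fun t => by
    simpa using (hg t).hasDerivAt.fun_sub ((hasDerivAt_id t).const_mul (deriv g a))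
  have hbound : ∀ t ∈ Set.uIcc a b, ‖deriv h t‖ ≤ C * |b - a| := fun t ht => by
    rw [Real.norm_eq_abs, (hh t).deriv]
    calc |deriv g t - deriv g a| ≤ C * |t - a| := abs_sub_le_of_abs_deriv_le hg' hC a t
      _ ≤ C * |b - a| := mul_le_mul_of_nonneg_left (Set.abs_sub_left_of_mem_uIcc ht)
          ((abs_nonneg _).trans (hC a))
  have := Convex.norm_image_sub_le_of_norm_deriv_le (fun t _ => (hh t).differentiableAt)
    hbound (convex_uIcc a b) Set.left_mem_uIcc Set.right_mem_uIcc
  calc |g b - g a - deriv g a * (b - a)| = ‖h b - h a‖ := by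
        rw [Real.norm_eq_abs]; congr 1; simp only [h]; ring
    _ ≤ C * |b - a| * |b - a| := this
    _ = C * (b - a) ^ 2 := by rw [mul_assoc, ← abs_mul, ← sq, abs_sq]

section Partials

variable {f : ℝ × ℝ → ℝ}

lemma pY_eq_fderiv (hf : Differentiable ℝ f) (p : ℝ × ℝ) : pY f p = fderiv ℝ f p (0, 1) :=
  ((hf p).hasFDerivAt.comp_hasDerivAt p.2
    ((hasDerivAt_const p.2 p.1).prodMk (hasDerivAt_id p.2))).deriv

lemma differentiable_pY_left (hf : ContDiff ℝ 2 f) (y : ℝ) :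
    Differentiable ℝ (fun s => pY f (s, y)) := by
  have hψ : ContDiff ℝ 1 (fun p => fderiv ℝ f p (0, 1)) :=
    (hf.fderiv_right (by norm_num)).clm_apply contDiff_const
  simp only [pY_eq_fderiv (hf.differentiable (by norm_num))]
  exact (hψ.differentiable one_ne_zero).comp (differentiable_id.prodMk (differentiable_const y))

noncomputable def taylorRemainder (f : ℝ × ℝ → ℝ) (x y s t : ℝ) : ℝ :=
  f (s, t) - f (x, y) - pX f (x, y) * (s - x) - pY f (x, y) * (t - y)

lemma abs_taylorRemainder_le (hf : ContDiff ℝ 2 f) {C₂₀ C₁₁ C₀₂ : ℝ}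
    (h₂₀ : ∀ z, |pd f 2 0 z| ≤ C₂₀) (h₁₁ : ∀ z, |pd f 1 1 z| ≤ C₁₁)
    (h₀₂ : ∀ z, |pd f 0 2 z| ≤ C₀₂) (x y s t : ℝ) :
    |taylorRemainder f x y s t| ≤
      C₂₀ * (s - x) ^ 2 + C₁₁ * (|s - x| * |t - y|) + C₀₂ * (t - y) ^ 2 := by
  have hx : ContDiff ℝ 2 (fun s' => f (s', y)) := hf.comp (contDiff_id.prodMk contDiff_const)
  have ht : ContDiff ℝ 2 (fun t' => f (s, t')) := hf.comp (contDiff_const.prodMk contDiff_id)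
  have hA : |f (s, t) - f (s, y) - pY f (s, y) * (t - y)| ≤ C₀₂ * (t - y) ^ 2 :=
    abs_sub_sub_deriv_mul_le (ht.differentiable (by norm_num)) ht.differentiable_deriv_two
      (fun t' => h₀₂ (s, t')) y t
  have hB : |pY f (s, y) - pY f (x, y)| ≤ C₁₁ * |s - x| :=
    abs_sub_le_of_abs_deriv_le (differentiable_pY_left hf y) (fun s' => h₁₁ (s', y)) x s
  have hC : |f (s, y) - f (x, y) - pX f (x, y) * (s - x)| ≤ C₂₀ * (s - x) ^ 2 :=
    abs_sub_sub_deriv_mul_le (hx.differentiable (by norm_num)) hx.differentiable_deriv_two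
      (fun s' => h₂₀ (s', y)) x s
  calc |taylorRemainder f x y s t|
      = |(f (s, t) - f (s, y) - pY f (s, y) * (t - y)) + (pY f (s, y) - pY f (x, y)) * (t - y)
          + (f (s, y) - f (x, y) - pX f (x, y) * (s - x))| := by unfold taylorRemainder; congr 1; ring
    _ ≤ C₀₂ * (t - y) ^ 2 + C₁₁ * |s - x| * |t - y| + C₂₀ * (s - x) ^ 2 := by
        refine (abs_add_three _ _ _).trans (add_le_add_three hA ?_ hC)
        rw [abs_mul]
        exact mul_le_mul_of_nonneg_right hB (abs_nonneg _)
    _ = C₂₀ * (s - x) ^ 2 + C₁₁ * (|s - x| * |t - y|) + C₀₂ * (t - y) ^ 2 := by ring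

end Partials

noncomputable def absMomentTerm (χ : ℝ × ℝ → ℝ) (p q : ℕ) (u v : ℝ) (i : ℤ × ℤ) : ℝ :=
  |χ (u - i.1, v - i.2)| * |u - i.1| ^ p * |v - i.2| ^ q

section Kernel

variable {χ : ℝ × ℝ → ℝ}

lemma absMomentTerm_nonneg (p q : ℕ) (u v : ℝ) (i : ℤ × ℤ) : 0 ≤ absMomentTerm χ p q u v i := by
  unfold absMomentTerm; positivity

lemma absMoment_ne_top_of_Mmoment_lt_top {η : ℕ} (h : Mmoment χ η < ⊤) {p q : ℕ}
    (hpq : p + q = η) : absMoment χ p q ≠ ⊤ :=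
  ((le_iSup (fun p : {p : ℕ × ℕ // p.1 + p.2 = η} => absMoment χ p.1.1 p.1.2)
    ⟨(p, q), hpq⟩).trans_lt h).ne

lemma tsum_ofReal_absMomentTerm_le (p q : ℕ) (u v : ℝ) :
    ∑' i, ENNReal.ofReal (absMomentTerm χ p q u v i) ≤ absMoment χ p q := by
  rw [ENNReal.tsum_prod']
  exact le_iSup₂ (f := fun u v => ∑' k : ℤ, ∑' j : ℤ,
    ENNReal.ofReal (|χ (u - k, v - j)| * |u - k| ^ p * |v - j| ^ q)) u v

lemma summable_absMomentTerm {p q : ℕ} (h : absMoment χ p q ≠ ⊤) (u v : ℝ) :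
    Summable (absMomentTerm χ p q u v) :=
  (ENNReal.summable_toReal (ne_top_of_le_ne_top h (tsum_ofReal_absMomentTerm_le p q u v))).congr
    fun i => ENNReal.toReal_ofReal (absMomentTerm_nonneg p q u v i)

lemma tsum_absMomentTerm_le {p q : ℕ} (h : absMoment χ p q ≠ ⊤) (u v : ℝ) :
    ∑' i, absMomentTerm χ p q u v i ≤ (absMoment χ p q).toReal := by
  rw [← ENNReal.ofReal_le_iff_le_toReal h, ENNReal.ofReal_tsum_of_nonneg
    (absMomentTerm_nonneg p q u v) (summable_absMomentTerm h u v)]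
  exact tsum_ofReal_absMomentTerm_le p q u v

lemma finite_setOf_abs_sub_intCast_lt_one (u : ℝ) : {k : ℤ | |u - k| < 1}.Finite := by
  refine (eventually_cofinite.1 (Int.tendsto_coe_cofinite.eventually
    (isCompact_closedBall u 1).compl_mem_cocompact)).subset fun k (hk : |u - k| < 1) => ?_
  simpa [Real.dist_eq, abs_sub_comm] using hk.le

/-- Away from the finitely many lattice points near `(u, v)`, `|χ|` is dominated by the
second moments. -/
lemma summable_absMomentTerm_zero_zero (h₂₀ : absMoment χ 2 0 ≠ ⊤) (h₀₂ : absMoment χ 0 2 ≠ ⊤)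
    (u v : ℝ) : Summable (absMomentTerm χ 0 0 u v) := by
  refine ((summable_absMomentTerm h₂₀ u v).add
    (summable_absMomentTerm h₀₂ u v)).of_norm_bounded_eventually ?_
  filter_upwards [((finite_setOf_abs_sub_intCast_lt_one u).prod
    (finite_setOf_abs_sub_intCast_lt_one v)).eventually_cofinite_notMem] with i hi
  simp only [Set.mem_prod, Set.mem_ofPred_eq, not_and_or, not_lt] at hi
  simp only [absMomentTerm, Real.norm_eq_abs, abs_abs, pow_zero, mul_one]
  have hχ := abs_nonneg (χ (u - i.1, v - i.2))
  rcases hi with hi | hi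
  · nlinarith [one_le_pow₀ (n := 2) hi, sq_nonneg (v - i.2), sq_abs (v - i.2)]
  · nlinarith [one_le_pow₀ (n := 2) hi, sq_nonneg (u - i.1), sq_abs (u - i.1)]

lemma summable_absMomentTerm_one_zero (h₂₀ : absMoment χ 2 0 ≠ ⊤) (h₀₂ : absMoment χ 0 2 ≠ ⊤)
    (u v : ℝ) : Summable (absMomentTerm χ 1 0 u v) := by
  refine ((summable_absMomentTerm_zero_zero h₂₀ h₀₂ u v).add
    (summable_absMomentTerm h₂₀ u v)).of_nonneg_of_le (absMomentTerm_nonneg 1 0 u v) fun i => ?_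
  simp only [absMomentTerm, pow_zero, pow_one, mul_one]
  nlinarith [abs_nonneg (χ (u - i.1, v - i.2)), sq_nonneg (|u - i.1| - 1)]

lemma summable_absMomentTerm_zero_one (h₂₀ : absMoment χ 2 0 ≠ ⊤) (h₀₂ : absMoment χ 0 2 ≠ ⊤)
    (u v : ℝ) : Summable (absMomentTerm χ 0 1 u v) := by
  refine ((summable_absMomentTerm_zero_zero h₂₀ h₀₂ u v).add
    (summable_absMomentTerm h₀₂ u v)).of_nonneg_of_le (absMomentTerm_nonneg 0 1 u v) fun i => ?_
  simp only [absMomentTerm, pow_zero, pow_one, mul_one]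
  nlinarith [abs_nonneg (χ (u - i.1, v - i.2)), sq_nonneg (|v - i.2| - 1)]

end Kernel

section Estimate

variable {χ : ℝ × ℝ → ℝ}

lemma PartitionOfUnity2.tsum_eq_one (h : PartitionOfUnity2 χ) {u v : ℝ}
    (hs : Summable fun i : ℤ × ℤ => χ (u - i.1, v - i.2)) :
    ∑' i : ℤ × ℤ, χ (u - i.1, v - i.2) = 1 :=
  hs.tsum_prod.trans (h u v)

lemma MomentCondition.tsum_mul_fst_eq_zero {c : ℝ} (h : MomentCondition χ 2 c) {u v : ℝ}
    (hs : Summable fun i : ℤ × ℤ => χ (u - i.1, v - i.2) * (u - i.1)) :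
    ∑' i : ℤ × ℤ, χ (u - i.1, v - i.2) * (u - i.1) = 0 := by
  rw [hs.tsum_prod]
  simpa only [pow_one, pow_zero, mul_one] using h.1 u v 1 0 le_rfl le_rfl

lemma MomentCondition.tsum_mul_snd_eq_zero {c : ℝ} (h : MomentCondition χ 2 c) {u v : ℝ}
    (hs : Summable fun i : ℤ × ℤ => χ (u - i.1, v - i.2) * (v - i.2)) :
    ∑' i : ℤ × ℤ, χ (u - i.1, v - i.2) * (v - i.2) = 0 := by
  rw [hs.tsum_prod]
  simpa only [pow_one, pow_zero, one_mul, mul_one] using h.1 u v 0 1 le_rfl le_rfl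

lemma Gop_sub_eq_tsum_mul_taylorRemainder {c : ℝ} (hpart : PartitionOfUnity2 χ)
    (hmom : MomentCondition χ 2 c) (hM : Mmoment χ 2 < ⊤) {f : ℝ × ℝ → ℝ} {w : ℝ} (hw : w ≠ 0)
    {x y : ℝ} (hR : Summable fun i : ℤ × ℤ =>
      χ (w * x - i.1, w * y - i.2) * taylorRemainder f x y (i.1 / w) (i.2 / w)) :
    Gop χ w f x y - f (x, y) =
      ∑' i : ℤ × ℤ, χ (w * x - i.1, w * y - i.2) * taylorRemainder f x y (i.1 / w) (i.2 / w) := by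
  have hM₂₀ := absMoment_ne_top_of_Mmoment_lt_top hM (show 2 + 0 = 2 from rfl)
  have hM₀₂ := absMoment_ne_top_of_Mmoment_lt_top hM (show 0 + 2 = 2 from rfl)
  set u := w * x
  set v := w * y
  set K : ℤ × ℤ → ℝ := fun i => χ (u - i.1, v - i.2)
  have hK : Summable K := (summable_absMomentTerm_zero_zero hM₂₀ hM₀₂ u v).of_norm_bounded
    fun i => by simp [K, absMomentTerm]
  have hKu : Summable fun i => K i * (u - i.1) :=
    (summable_absMomentTerm_one_zero hM₂₀ hM₀₂ u v).of_norm_bounded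
      fun i => by simp [K, absMomentTerm]
  have hKv : Summable fun i => K i * (v - i.2) :=
    (summable_absMomentTerm_zero_one hM₂₀ hM₀₂ u v).of_norm_bounded
      fun i => by simp [K, absMomentTerm]
  have h₀ := hK.mul_left (f (x, y))
  have h₁ := hKu.mul_left (pX f (x, y) / w)
  have h₂ := hKv.mul_left (pY f (x, y) / w)
  -- `k / w - x = -(u - k) / w`: the first-order Taylor terms are first moments of `χ`.
  have hdecomp : ∀ i : ℤ × ℤ, K i * f (i.1 / w, i.2 / w) = f (x, y) * K i
      - pX f (x, y) / w * (K i * (u - i.1)) - pY f (x, y) / w * (K i * (v - i.2))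
      + K i * taylorRemainder f x y (i.1 / w) (i.2 / w) := fun i => by
    simp only [taylorRemainder, u, v]; field_simp; ring
  have hs : Summable fun i : ℤ × ℤ => K i * f (i.1 / w, i.2 / w) :=
    (((h₀.sub h₁).sub h₂).add hR).congr fun i => (hdecomp i).symm
  rw [Gop, ← hs.tsum_prod, tsum_congr hdecomp, ((h₀.sub h₁).sub h₂).tsum_add hR,
    (h₀.sub h₁).tsum_sub h₂, h₀.tsum_sub h₁, tsum_mul_left, tsum_mul_left, tsum_mul_left,
    hpart.tsum_eq_one hK, hmom.tsum_mul_fst_eq_zero hKu, hmom.tsum_mul_snd_eq_zero hKv]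
  ring

lemma norm_mul_taylorRemainder_le {f : ℝ × ℝ → ℝ} (hf : ContDiff ℝ 2 f) {C₂₀ C₁₁ C₀₂ : ℝ}
    (h₂₀ : ∀ z, |pd f 2 0 z| ≤ C₂₀) (h₁₁ : ∀ z, |pd f 1 1 z| ≤ C₁₁)
    (h₀₂ : ∀ z, |pd f 0 2 z| ≤ C₀₂) {w : ℝ} (hw : 0 < w) (x y : ℝ) (i : ℤ × ℤ) :
    ‖χ (w * x - i.1, w * y - i.2) * taylorRemainder f x y (i.1 / w) (i.2 / w)‖ ≤
      (C₂₀ * absMomentTerm χ 2 0 (w * x) (w * y) i + C₁₁ * absMomentTerm χ 1 1 (w * x) (w * y) i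
        + C₀₂ * absMomentTerm χ 0 2 (w * x) (w * y) i) / w ^ 2 := by
  have hs : i.1 / w - x = -((w * x - i.1) / w) := by field_simp; ring
  have ht : i.2 / w - y = -((w * y - i.2) / w) := by field_simp; ring
  rw [Real.norm_eq_abs, abs_mul]
  calc _ ≤ |χ (w * x - i.1, w * y - i.2)| * (C₂₀ * (i.1 / w - x) ^ 2
        + C₁₁ * (|i.1 / w - x| * |i.2 / w - y|) + C₀₂ * (i.2 / w - y) ^ 2) :=
        mul_le_mul_of_nonneg_left (abs_taylorRemainder_le hf h₂₀ h₁₁ h₀₂ x y _ _) (abs_nonneg _)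
    _ = _ := by
        rw [hs, ht, neg_sq, neg_sq, abs_neg, abs_neg, abs_div, abs_div, abs_of_pos hw, div_pow,
          div_pow, ← sq_abs (w * x - i.1), ← sq_abs (w * y - i.2)]
        simp only [absMomentTerm, pow_zero, pow_one, mul_one]
        field_simp

theorem abs_Gop_sub_le {c : ℝ} (hpart : PartitionOfUnity2 χ) (hmom : MomentCondition χ 2 c)
    (hM : Mmoment χ 2 < ⊤) {f : ℝ × ℝ → ℝ} (hf : ContDiff ℝ 2 f) {C₂₀ C₁₁ C₀₂ : ℝ}
    (h₂₀ : ∀ z, |pd f 2 0 z| ≤ C₂₀) (h₁₁ : ∀ z, |pd f 1 1 z| ≤ C₁₁)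
    (h₀₂ : ∀ z, |pd f 0 2 z| ≤ C₀₂) {w : ℝ} (hw : 0 < w) (x y : ℝ) :
    |Gop χ w f x y - f (x, y)| ≤ (C₂₀ * (absMoment χ 2 0).toReal
      + C₁₁ * (absMoment χ 1 1).toReal + C₀₂ * (absMoment χ 0 2).toReal) / w ^ 2 := by
  have hM₂₀ := absMoment_ne_top_of_Mmoment_lt_top hM (show 2 + 0 = 2 from rfl)
  have hM₁₁ := absMoment_ne_top_of_Mmoment_lt_top hM (show 1 + 1 = 2 from rfl)
  have hM₀₂ := absMoment_ne_top_of_Mmoment_lt_top hM (show 0 + 2 = 2 from rfl)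
  have s₂₀ := (summable_absMomentTerm hM₂₀ (w * x) (w * y)).mul_left C₂₀
  have s₁₁ := (summable_absMomentTerm hM₁₁ (w * x) (w * y)).mul_left C₁₁
  have s₀₂ := (summable_absMomentTerm hM₀₂ (w * x) (w * y)).mul_left C₀₂
  have hbound := norm_mul_taylorRemainder_le (χ := χ) hf h₂₀ h₁₁ h₀₂ hw x y
  have hB := ((s₂₀.add s₁₁).add s₀₂).div_const (w ^ 2)
  rw [Gop_sub_eq_tsum_mul_taylorRemainder hpart hmom hM hw.ne' (hB.of_norm_bounded hbound),
    ← Real.norm_eq_abs]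
  refine (tsum_of_norm_bounded hB.hasSum hbound).trans ?_
  rw [tsum_div_const, (s₂₀.add s₁₁).tsum_add s₀₂, s₂₀.tsum_add s₁₁, tsum_mul_left,
    tsum_mul_left, tsum_mul_left]
  have hC₂₀ : 0 ≤ C₂₀ := (abs_nonneg _).trans (h₂₀ 0)
  have hC₁₁ : 0 ≤ C₁₁ := (abs_nonneg _).trans (h₁₁ 0)
  have hC₀₂ : 0 ≤ C₀₂ := (abs_nonneg _).trans (h₀₂ 0)
  gcongr
  · exact tsum_absMomentTerm_le hM₂₀ _ _
  · exact tsum_absMomentTerm_le hM₁₁ _ _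
  · exact tsum_absMomentTerm_le hM₀₂ _ _

end Estimate

lemma tendsto_iSup_abs_mul_of_abs_le_div_sq {α : Type*} {g : ℝ → α → ℝ} {C : ℝ}
    (hg : ∀ w, 0 < w → ∀ a, |g w a| ≤ C / w ^ 2) :
    Tendsto (fun w => ⨆ a, |w * g w a|) atTop (𝓝 0) := by
  have hlim : Tendsto (fun w : ℝ => |C| / w) atTop (𝓝 0) :=
    tendsto_const_nhds.div_atTop tendsto_id
  refine tendsto_of_tendsto_of_tendsto_of_le_of_le' tendsto_const_nhds hlim
    (Eventually.of_forall fun w => Real.iSup_nonneg fun a => abs_nonneg _) ?_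
  filter_upwards [eventually_gt_atTop 0] with w hw
  refine Real.iSup_le (fun a => ?_) (by positivity)
  calc |w * g w a| = w * |g w a| := by rw [abs_mul, abs_of_pos hw]
    _ ≤ w * (C / w ^ 2) := mul_le_mul_of_nonneg_left (hg w hw a) hw.le
    _ = C / w := by field_simp
    _ ≤ |C| / w := div_le_div_of_nonneg_right (le_abs_self C) hw.le

theorem statement15_general (χ : ℝ × ℝ → ℝ)
    (hpart : PartitionOfUnity2 χ)
    (c : ℝ) (hM2 : Mmoment χ 2 < ⊤) (hmom : MomentCondition χ 2 c)
    (f : ℝ × ℝ → ℝ) (hf : ContDiff ℝ 2 f)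
    (hbd : ∀ i j : ℕ, i + j ≤ 2 → ∃ C : ℝ, ∀ z, |pd f i j z| ≤ C) :
    (∃ C : ℝ, ∀ w : ℝ, 0 < w → ∀ x y : ℝ,
      |Gop χ w f x y - f (x, y)| ≤ C / w ^ 2) ∧
    Tendsto (fun w : ℝ => ⨆ p : ℝ × ℝ, |w * (Gop χ w f p.1 p.2 - f p)|)
      atTop (nhds 0) := by
  obtain ⟨C₂₀, h₂₀⟩ := hbd 2 0 le_rfl
  obtain ⟨C₁₁, h₁₁⟩ := hbd 1 1 le_rfl
  obtain ⟨C₀₂, h₀₂⟩ := hbd 0 2 le_rfl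
  have hbound := fun w (hw : 0 < w) x y => abs_Gop_sub_le hpart hmom hM2 hf h₂₀ h₁₁ h₀₂ hw x y
  exact ⟨⟨_, hbound⟩, tendsto_iSup_abs_mul_of_abs_le_div_sq fun w hw p => hbound w hw p.1 p.2⟩

/-- ‖G_w f − f‖_∞ = O(w⁻²) as w → ∞, so in particular
w·(G_w f − f) → 0 uniformly. -/
theorem statement15 (χ : ℝ × ℝ → ℝ) (hχc : Continuous χ) (hχb : ∃ C : ℝ, ∀ p, |χ p| ≤ C)
    (hpart : PartitionOfUnity2 χ)
    (c : ℝ) (hM2 : Mmoment χ 2 < ⊤) (hmom : MomentCondition χ 2 c)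
    (f : ℝ × ℝ → ℝ) (hf : ContDiff ℝ 2 f)
    (hbd : ∀ i j : ℕ, i + j ≤ 2 → ∃ C : ℝ, ∀ z, |pd f i j z| ≤ C) :
    (∃ C : ℝ, ∀ w : ℝ, 0 < w → ∀ x y : ℝ,
      |Gop χ w f x y - f (x, y)| ≤ C / w ^ 2) ∧
    Tendsto (fun w : ℝ => ⨆ p : ℝ × ℝ, |w * (Gop χ w f p.1 p.2 - f p)|)
      atTop (nhds 0) :=
  statement15_general χ hpart c hM2 hmom f hf hbd
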